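/- arXiv:2204.01445 — 6 statements merged into one kernel-verified Lean document; each statement's English description precedes it below -/
import Mathlib

section
/- Shifted composition is associative on G^1, i.e., (f • g) • h = f • (g • h) for all f, g, h ∈ G^1, and the constant series 1 is a two-sided unit: 1 • g = g = g • 1. -/
/-- Words over the alphabet of positive integers. -/
abbrev Word : Type := List ℕ+

variable {A : Type*}

/-- The constant series `1`: coefficient `1` on the empty word, `0` elsewhere. -/
def one [CommRing A] : Word → A := fun w => if w = [] then 1 else 0

/-- Cauchy product of noncommutative series:
`(f·g)(w) = Σ f(u) g(v)` over all factorizations `w = u ++ v`. -/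
def cauchy [CommRing A] (f g : Word → A) : Word → A := fun w =>
  ∑ k ∈ Finset.range (w.length + 1), f (w.take k) * g (w.drop k)

/-- The subword of `w` consisting of the letters at positions in `S` (in increasing order). -/
def subword (w : Word) (S : Finset ℕ) : Word :=
  ((w.zipIdx.map Prod.swap).filter (fun p => decide (p.1 ∈ S))).map Prod.snd

/-- The (possibly empty) factor of `w` occupying the positions strictly between `s` and the
next element of `S` after `s` (or the end of the word if there is no such element). -/
def gapAfter (w : Word) (S : Finset ℕ) (s : ℕ) : Word :=
  ((w.zipIdx.map Prod.swap).filter (fun p => decide (s < p.1 ∧ ∀ j ∈ S, j ≤ s ∨ p.1 < j))).map Prod.snd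

/-- Shifted substitution `f(xg(x))`: its constant coefficient is `f(∅)`, and its coefficient
on a nonempty word `w = a_1⋯a_n` is the sum, over subsets `S = {s_1<⋯<s_k}` of the positions
of `w` containing the first position, of `f(a_{s_1}⋯a_{s_k})·g(w_{(s_1,s_2)})⋯g(w_{(s_k,n+1)})`,
where `w_{(s_j,s_{j+1})}` is the factor of `w` strictly between positions `s_j` and `s_{j+1}`. -/
def subst [CommRing A] (f g : Word → A) : Word → A := fun w =>
  if w = [] then f []
  else ∑ S ∈ (Finset.range w.length).powerset.filter (fun S => 0 ∈ S),
    f (subword w S) * ∏ s ∈ S, g (gapAfter w S s)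

/-- Shifted composition `f • g := g · f(xg(x))`. -/
def bullet [CommRing A] (f g : Word → A) : Word → A := cauchy g (subst f g)

/-!
Write `a⁻¹f` (`lquot a f`) for the left quotient `u ↦ f (a :: u)`. Grouping the position sets `S`
in the definition of `f(xg(x))` by their second element gives the recursion
`f(xg)(∅) = f(∅)`, `a⁻¹(f(xg)) = g · (a⁻¹f)(xg)`.
By induction on words, this recursion shows that substitution `f ↦ f(xh)` is multiplicative
for the Cauchy product, that `(f(xg))(xh) = f(x (g • h))`, and that `1(xg) = 1`, `f(x·1) = f`.
Associativity then reads `h · (g · f(xg))(xh) = (h · g(xh)) · f(x (g • h))`.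
-/

def lquot (a : ℕ+) (f : Word → A) : Word → A := fun u => f (a :: u)

section cauchy

variable [CommRing A]

theorem cauchy_nil (f g : Word → A) : cauchy f g [] = f [] * g [] := by
  simp [cauchy]

theorem cauchy_cons (f g : Word → A) (a : ℕ+) (t : Word) :
    cauchy f g (a :: t) = f [] * g (a :: t) + cauchy (lquot a f) g t := by
  rw [cauchy, List.length_cons, Finset.sum_range_succ', add_comm]
  simp [cauchy, lquot]

theorem lquot_cauchy (f g : Word → A) (a : ℕ+) :
    lquot a (cauchy f g) = f [] • lquot a g + cauchy (lquot a f) g :=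
  funext fun t => cauchy_cons f g a t

theorem cauchy_one (f : Word → A) : cauchy f one = f := by
  funext w
  rw [cauchy, Finset.sum_eq_single_of_mem w.length (Finset.self_mem_range_succ _)]
  · simp [one]
  · intro k hk hne
    have : k < w.length := by have := Finset.mem_range.mp hk; omega
    simp [one, List.drop_eq_nil_iff, this]

theorem one_cauchy (f : Word → A) : cauchy one f = f := by
  funext w
  rw [cauchy, Finset.sum_eq_single_of_mem 0 (by simp)]
  · simp [one]
  · intro k hk hne
    have : w ≠ [] := by rintro rfl; simp_all
    simp [one, List.take_eq_nil_iff, hne, this]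

theorem cauchy_add (f g g' : Word → A) : cauchy f (g + g') = cauchy f g + cauchy f g' := by
  funext w
  simp [cauchy, mul_add, Finset.sum_add_distrib]

theorem add_cauchy (f f' g : Word → A) : cauchy (f + f') g = cauchy f g + cauchy f' g := by
  funext w
  simp [cauchy, add_mul, Finset.sum_add_distrib]

theorem cauchy_smul (c : A) (f g : Word → A) : cauchy f (c • g) = c • cauchy f g := by
  funext w
  simp [cauchy, Finset.mul_sum, mul_left_comm]

theorem smul_cauchy (c : A) (f g : Word → A) : cauchy (c • f) g = c • cauchy f g := by
  funext w
  simp [cauchy, Finset.mul_sum, mul_assoc]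

theorem cauchy_assoc (f g h : Word → A) : cauchy (cauchy f g) h = cauchy f (cauchy g h) := by
  funext w
  induction w generalizing f with
  | nil => simp only [cauchy_nil, mul_assoc]
  | cons a t ih =>
    rw [cauchy_cons, lquot_cauchy, add_cauchy, smul_cauchy, Pi.add_apply, Pi.smul_apply, ih,
      cauchy_nil, cauchy_cons, cauchy_cons, smul_eq_mul]
    ring

theorem cauchy_congr_of_drop {f g g' : Word → A} {w : Word}
    (h : ∀ k, g (w.drop k) = g' (w.drop k)) : cauchy f g w = cauchy f g' w :=
  Finset.sum_congr rfl fun k _ => by rw [h k]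

end cauchy

def filterPos {α : Type*} (P : ℕ → Prop) [DecidablePred P] (i : ℕ) (w : List α) : List α :=
  (((w.zipIdx i).map Prod.swap).filter (fun p => decide (P p.1))).map Prod.snd

section filterPos

variable {α : Type*} {P Q : ℕ → Prop} [DecidablePred P] [DecidablePred Q] {i : ℕ}

theorem subword_eq_filterPos (w : Word) (S : Finset ℕ) : subword w S = filterPos (· ∈ S) 0 w :=
  rfl

theorem gapAfter_eq_filterPos (w : Word) (S : Finset ℕ) (s : ℕ) :
    gapAfter w S s = filterPos (fun p => s < p ∧ ∀ j ∈ S, j ≤ s ∨ p < j) 0 w :=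
  rfl

theorem filterPos_cons (a : α) (t : List α) :
    filterPos P i (a :: t) = (if P i then [a] else []) ++ filterPos P (i + 1) t := by
  by_cases h : P i <;> simp [filterPos, h]

theorem filterPos_append (u v : List α) :
    filterPos P i (u ++ v) = filterPos P i u ++ filterPos P (i + u.length) v := by
  simp [filterPos, List.zipIdx_append, List.filter_append]

theorem filterPos_add (c : ℕ) (w : List α) :
    filterPos P (i + c) w = filterPos (fun j => P (j + c)) i w := by
  induction w generalizing i with
  | nil => rfl
  | cons a t ih => rw [filterPos_cons, filterPos_cons, Nat.add_right_comm, ih]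

theorem filterPos_congr {w : List α} (h : ∀ j, i ≤ j → j < i + w.length → (P j ↔ Q j)) :
    filterPos P i w = filterPos Q i w := by
  unfold filterPos
  congr 1
  refine List.filter_congr fun ⟨j, c⟩ hm => decide_eq_decide.mpr ?_
  obtain ⟨h1, h2, -⟩ := List.mem_zipIdx (by simpa using hm : (c, j) ∈ w.zipIdx i)
  exact h j h1 h2

theorem filterPos_eq_nil {w : List α} (h : ∀ j, i ≤ j → j < i + w.length → ¬ P j) :
    filterPos P i w = [] := by
  rw [filterPos_congr (Q := fun _ => False) (by simpa using h)]
  simp [filterPos]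

theorem filterPos_eq_self {w : List α} (h : ∀ j, i ≤ j → j < i + w.length → P j) :
    filterPos P i w = w := by
  rw [filterPos_congr (Q := fun _ => True) (by simpa using h)]
  simp [filterPos, List.map_map, Function.comp_def]

end filterPos

-- `{0} ∪ (T + (k + 1))`: the first position, a gap of length `k`, then `T` shifted past it.
def shiftInsert (k : ℕ) (T : Finset ℕ) : Finset ℕ := insert 0 (T.image (· + (k + 1)))

section shiftInsert

variable {k : ℕ} {T : Finset ℕ}

theorem mem_shiftInsert {x : ℕ} : x ∈ shiftInsert k T ↔ x = 0 ∨ ∃ j ∈ T, j + (k + 1) = x := by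
  simp [shiftInsert]

theorem succ_mem_shiftInsert (h0 : 0 ∈ T) : k + 1 ∈ shiftInsert k T :=
  mem_shiftInsert.mpr (Or.inr ⟨0, h0, zero_add _⟩)

theorem shiftInsert_ne_singleton_zero (h0 : 0 ∈ T) : shiftInsert k T ≠ {0} := fun h => by
  simpa [h] using succ_mem_shiftInsert (k := k) h0

theorem shiftInsert_inj {k' : ℕ} {T' : Finset ℕ} (h0 : 0 ∈ T) (h0' : 0 ∈ T')
    (h : shiftInsert k T = shiftInsert k' T') : k = k' ∧ T = T' := by
  have hk : k = k' := by
    rcases mem_shiftInsert.mp (h ▸ succ_mem_shiftInsert (k := k) h0) with _ | ⟨j, -, hj⟩ <;>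
    rcases mem_shiftInsert.mp (h.symm ▸ succ_mem_shiftInsert (k := k') h0') with _ | ⟨j', -, hj'⟩ <;>
    omega
  subst hk
  refine ⟨rfl, Finset.ext fun j => ?_⟩
  simpa [mem_shiftInsert] using congrArg (j + (k + 1) ∈ ·) h

theorem exists_shiftInsert_eq {n : ℕ} {S : Finset ℕ} (hS : S ⊆ Finset.range (n + 1))
    (h0 : 0 ∈ S) (hne : S ≠ {0}) :
    ∃ k < n, ∃ T ⊆ Finset.range (n - k), 0 ∈ T ∧ shiftInsert k T = S := by
  have hpos : (S.erase 0).Nonempty := by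
    by_contra h
    exact hne (Finset.eq_singleton_iff_unique_mem.mpr
      ⟨h0, fun x hx => by_contra fun hx0 => h ⟨x, Finset.mem_erase.mpr ⟨hx0, hx⟩⟩⟩)
  set m := (S.erase 0).min' hpos
  have hmS : m ∈ S.erase 0 := Finset.min'_mem _ hpos
  have hm_le : ∀ x ∈ S, x ≠ 0 → m ≤ x := fun x hx hx0 =>
    Finset.min'_le _ _ (Finset.mem_erase.mpr ⟨hx0, hx⟩)
  obtain ⟨hm0, hmS⟩ := Finset.mem_erase.mp hmS
  have hmn : m < n + 1 := Finset.mem_range.mp (hS hmS)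
  refine ⟨m - 1, by omega, (Finset.range (n - (m - 1))).filter (· + m ∈ S),
    Finset.filter_subset _ _, Finset.mem_filter.mpr ⟨Finset.mem_range.mpr (by omega), by simpa⟩,
    Finset.ext fun x => ?_⟩
  have hm : m - 1 + 1 = m := by omega
  simp only [mem_shiftInsert, Finset.mem_filter, Finset.mem_range, hm]
  constructor
  · rintro (rfl | ⟨j, ⟨-, hj⟩, rfl⟩)
    · exact h0
    · exact hj
  · intro hx
    by_cases hx0 : x = 0
    · exact Or.inl hx0
    · have := hm_le x hx hx0
      have := Finset.mem_range.mp (hS hx)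
      exact Or.inr ⟨x - m, ⟨by omega, by rwa [Nat.sub_add_cancel ‹m ≤ x›]⟩, by omega⟩

theorem prod_shiftInsert {M : Type*} [CommMonoid M] (k : ℕ) (T : Finset ℕ) (φ : ℕ → M) :
    ∏ s ∈ shiftInsert k T, φ s = φ 0 * ∏ j ∈ T, φ (j + (k + 1)) := by
  rw [shiftInsert, Finset.prod_insert (by simp), Finset.prod_image (by simp)]

end shiftInsert

def rootedSubsets (n : ℕ) : Finset (Finset ℕ) := (Finset.range n).powerset.filter (fun S => 0 ∈ S)

theorem mem_rootedSubsets {n : ℕ} {S : Finset ℕ} :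
    S ∈ rootedSubsets n ↔ S ⊆ Finset.range n ∧ 0 ∈ S := by
  simp [rootedSubsets]

theorem shiftInsert_mem_rootedSubsets {n k : ℕ} {T : Finset ℕ} (hT : T ⊆ Finset.range (n - k)) :
    shiftInsert k T ∈ rootedSubsets (n + 1) := by
  refine mem_rootedSubsets.mpr ⟨fun x hx => ?_, mem_shiftInsert.mpr (Or.inl rfl)⟩
  rcases mem_shiftInsert.mp hx with rfl | ⟨j, hj, rfl⟩
  · simp
  · have := Finset.mem_range.mp (hT hj)
    simp only [Finset.mem_range]
    omega

-- Group the rooted subsets `S ≠ {0}` by their second element `k + 1`.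
theorem sum_rootedSubsets_erase {M : Type*} [AddCommMonoid M] (n : ℕ) (F : Finset ℕ → M) :
    ∑ S ∈ (rootedSubsets (n + 1)).erase {0}, F S =
      ∑ k ∈ Finset.range n, ∑ T ∈ rootedSubsets (n - k), F (shiftInsert k T) := by
  rw [Finset.sum_sigma']
  symm
  refine Finset.sum_bij (fun p _ => shiftInsert p.1 p.2) ?_ ?_ ?_ fun _ _ => rfl
  · rintro ⟨k, T⟩ hp
    obtain ⟨-, hT, h0⟩ := by simpa [mem_rootedSubsets] using hp
    exact Finset.mem_erase.mpr ⟨shiftInsert_ne_singleton_zero h0, shiftInsert_mem_rootedSubsets hT⟩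
  · rintro ⟨k, T⟩ hp ⟨k', T'⟩ hp' h
    obtain ⟨-, -, h0⟩ := by simpa [mem_rootedSubsets] using hp
    obtain ⟨-, -, h0'⟩ := by simpa [mem_rootedSubsets] using hp'
    obtain ⟨rfl, rfl⟩ := shiftInsert_inj h0 h0' h
    rfl
  · intro S hS
    obtain ⟨hne, hS, h0⟩ := by simpa [mem_rootedSubsets] using hS
    obtain ⟨k, hk, T, hT, hT0, rfl⟩ := exists_shiftInsert_eq hS h0 hne
    exact ⟨⟨k, T⟩, by simpa [mem_rootedSubsets] using ⟨hk, hT, hT0⟩, rfl⟩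

section shiftInsert_word

variable {a : ℕ+} {t : Word} {k : ℕ} {T : Finset ℕ}

theorem subword_cons_singleton_zero : subword (a :: t) {0} = [a] := by
  rw [subword_eq_filterPos, filterPos_cons, filterPos_eq_nil (by simp; omega)]
  simp

theorem gapAfter_cons_singleton_zero : gapAfter (a :: t) {0} 0 = t := by
  rw [gapAfter_eq_filterPos, filterPos_cons, if_neg (by simp),
    filterPos_eq_self (by intro j hj _; exact ⟨by omega, by simp⟩)]
  simp

theorem subword_cons_shiftInsert (hk : k ≤ t.length) :
    subword (a :: t) (shiftInsert k T) = a :: subword (t.drop k) T := by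
  rw [subword_eq_filterPos, filterPos_cons, if_pos (mem_shiftInsert.mpr (Or.inl rfl))]
  conv_lhs => rw [← List.take_append_drop k t, filterPos_append]
  rw [filterPos_eq_nil (fun j hj hj2 hj3 => by
      simp only [List.length_take] at hj2
      rcases mem_shiftInsert.mp hj3 with _ | ⟨x, -, hx⟩ <;> omega),
    List.length_take, min_eq_left hk, show 1 + k = 0 + (k + 1) by omega, filterPos_add,
    subword_eq_filterPos, List.nil_append]
  refine congrArg _ (filterPos_congr fun j _ _ => ?_)
  simp [mem_shiftInsert]

theorem gapAfter_cons_shiftInsert_zero (hk : k ≤ t.length) (h0 : 0 ∈ T) :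
    gapAfter (a :: t) (shiftInsert k T) 0 = t.take k := by
  rw [gapAfter_eq_filterPos, filterPos_cons, if_neg (by simp)]
  conv_lhs => rw [← List.take_append_drop k t, filterPos_append]
  rw [filterPos_eq_self (fun j hj hj2 => by
      simp only [List.length_take] at hj2
      refine ⟨by omega, fun x hx => ?_⟩
      rcases mem_shiftInsert.mp hx with _ | ⟨y, -, _⟩ <;> omega),
    filterPos_eq_nil (fun j hj _ hP => by
      simp only [List.length_take] at hj
      rcases hP.2 (k + 1) (succ_mem_shiftInsert h0) with _ | _ <;> omega)]
  simp

theorem gapAfter_cons_shiftInsert (hk : k ≤ t.length) (j : ℕ) :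
    gapAfter (a :: t) (shiftInsert k T) (j + (k + 1)) = gapAfter (t.drop k) T j := by
  rw [gapAfter_eq_filterPos, filterPos_cons, if_neg (by simp)]
  conv_lhs => rw [← List.take_append_drop k t, filterPos_append]
  rw [filterPos_eq_nil (fun i _ hi hP => by simp only [List.length_take] at hi; omega),
    List.length_take, min_eq_left hk, show 1 + k = 0 + (k + 1) by omega, filterPos_add,
    gapAfter_eq_filterPos]
  simp only [List.nil_append]
  refine filterPos_congr fun i _ _ => ⟨fun ⟨h1, h2⟩ => ⟨by omega, fun x hx => ?_⟩,
    fun ⟨h1, h2⟩ => ⟨by omega, fun x hx => ?_⟩⟩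
  · rcases h2 (x + (k + 1)) (mem_shiftInsert.mpr (Or.inr ⟨x, hx, rfl⟩)) with _ | _ <;> omega
  · rcases mem_shiftInsert.mp hx with _ | ⟨y, hy, rfl⟩
    · omega
    · rcases h2 y hy with _ | _ <;> omega

end shiftInsert_word

theorem List.drop_induction {α : Type*} {P : List α → Prop} (nil : P [])
    (cons : ∀ a t, (∀ k, P (t.drop k)) → P (a :: t)) : ∀ w, P w
  | [] => nil
  | a :: t => cons a t fun k => List.drop_induction nil cons (t.drop k)
termination_by w => w.length
decreasing_by simp only [List.length_drop, List.length_cons]; omega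

section substitution

variable [CommRing A]

theorem subst_nil (f g : Word → A) : subst f g [] = f [] := by
  simp [subst]

theorem subst_of_ne_nil (f g : Word → A) {w : Word} (hw : w ≠ []) :
    subst f g w = ∑ S ∈ rootedSubsets w.length, f (subword w S) * ∏ s ∈ S, g (gapAfter w S s) := by
  simp [subst, hw, rootedSubsets]

theorem subst_cons (f g : Word → A) (a : ℕ+) (t : Word) :
    subst f g (a :: t) = cauchy g (subst (lquot a f) g) t := by
  have hterm : ∀ k < t.length, g (t.take k) * subst (lquot a f) g (t.drop k) =
      ∑ T ∈ rootedSubsets (t.length - k), f (subword (a :: t) (shiftInsert k T)) *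
        ∏ s ∈ shiftInsert k T, g (gapAfter (a :: t) (shiftInsert k T) s) := by
    intro k hk
    rw [subst_of_ne_nil _ _ (by simpa [List.drop_eq_nil_iff] using hk), List.length_drop,
      Finset.mul_sum]
    refine Finset.sum_congr rfl fun T hT => ?_
    rw [subword_cons_shiftInsert hk.le, prod_shiftInsert,
      gapAfter_cons_shiftInsert_zero hk.le (mem_rootedSubsets.mp hT).2]
    simp only [gapAfter_cons_shiftInsert hk.le, lquot]
    ring
  have h0 : ({0} : Finset ℕ) ∈ rootedSubsets (t.length + 1) := by simp [rootedSubsets]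
  rw [subst_of_ne_nil _ _ (List.cons_ne_nil a t), List.length_cons,
    ← Finset.add_sum_erase _ _ h0, sum_rootedSubsets_erase, cauchy, Finset.sum_range_succ,
    Finset.sum_congr rfl fun k hk => hterm k (Finset.mem_range.mp hk), subword_cons_singleton_zero,
    Finset.prod_singleton, gapAfter_cons_singleton_zero, List.take_length, List.drop_length,
    subst_nil, lquot, add_comm, mul_comm]

theorem lquot_subst (f g : Word → A) (a : ℕ+) :
    lquot a (subst f g) = cauchy g (subst (lquot a f) g) :=
  funext fun t => subst_cons f g a t

theorem subst_zero (g : Word → A) : subst 0 g = 0 := by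
  funext w
  simp [subst]

theorem subst_add (f f' g : Word → A) : subst (f + f') g = subst f g + subst f' g := by
  funext w
  simp only [subst, Pi.add_apply, add_mul, Finset.sum_add_distrib]
  split_ifs <;> rfl

theorem subst_smul (c : A) (f g : Word → A) : subst (c • f) g = c • subst f g := by
  funext w
  simp only [subst, Pi.smul_apply, smul_eq_mul]
  split_ifs
  · rfl
  · simp only [Finset.mul_sum, mul_assoc]

theorem one_subst (g : Word → A) : subst one g = one := by
  funext w
  cases w with
  | nil => simp [subst_nil, one]
  | cons a t =>
    have : lquot a (one : Word → A) = 0 := funext fun u => by simp [lquot, one]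
    rw [subst_cons, this, subst_zero]
    simp [cauchy, one]

theorem subst_one (f : Word → A) : subst f one = f := by
  funext w
  induction w generalizing f with
  | nil => exact subst_nil f one
  | cons a t ih => rw [subst_cons, one_cauchy, ih, lquot]

theorem subst_cauchy (p q h : Word → A) :
    subst (cauchy p q) h = cauchy (subst p h) (subst q h) := by
  funext w
  induction w using List.drop_induction generalizing p with
  | nil => simp only [subst_nil, cauchy_nil]
  | cons a t ih =>
    rw [subst_cons, lquot_cauchy, subst_add, subst_smul,
      cauchy_congr_of_drop (g' := p [] • subst (lquot a q) h + cauchy (subst (lquot a p) h) (subst q h))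
        fun k => by simp only [Pi.add_apply, ih k],
      cauchy_add, cauchy_smul, ← cauchy_assoc, cauchy_cons, subst_nil, lquot_subst, subst_cons]
    rfl

theorem subst_subst (f g h : Word → A) : subst (subst f g) h = subst f (bullet g h) := by
  funext w
  induction w using List.drop_induction generalizing f with
  | nil => simp only [subst_nil]
  | cons a t ih =>
    rw [subst_cons, lquot_subst, subst_cauchy,
      cauchy_congr_of_drop (g' := cauchy (subst g h) (subst (lquot a f) (bullet g h)))
        fun k => cauchy_congr_of_drop fun j => by rw [List.drop_drop, ih],
      ← cauchy_assoc, subst_cons]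
    rfl

theorem bullet_assoc (f g h : Word → A) : bullet (bullet f g) h = bullet f (bullet g h) := by
  rw [bullet, bullet, subst_cauchy, subst_subst, ← cauchy_assoc]
  rfl

theorem one_bullet (g : Word → A) : bullet one g = g := by
  rw [bullet, one_subst, cauchy_one]

theorem bullet_one (g : Word → A) : bullet g one = g := by
  rw [bullet, one_cauchy, subst_one]

end substitution

/-- shifted composition is associative on `G^1`, and the constant
series `1` is a two-sided unit for it. -/
theorem stmt1 [CommRing A] :
    (∀ f g h : Word → A, f [] = 1 → g [] = 1 → h [] = 1 →
      bullet (bullet f g) h = bullet f (bullet g h)) ∧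
    (∀ g : Word → A, g [] = 1 → bullet one g = g ∧ bullet g one = g) :=
  ⟨fun f g h _ _ _ => bullet_assoc f g h, fun g _ => ⟨one_bullet g, bullet_one g⟩⟩
end

section
/- The product ◁ on G^0 satisfies the right pre-Lie identity: for all f, g, h ∈ G^0, (f ◁ g) ◁ h − f ◁ (g ◁ h) = (f ◁ h) ◁ g − f ◁ (h ◁ g). Consequently G^0 equipped with the bracket [f,g] := f ◁ g − g ◁ f is a Lie algebra. -/
variable {A : Type*}

/-- The insertion (pre-Lie) product on series with zero constant coefficient:
`(f ◁ g)(w) = Σ f(u ++ v) g(q)` over all factorizations `w = u ++ q ++ v` of `w` into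
three consecutive (possibly empty) factors. -/
def tri [CommRing A] (f g : Word → A) : Word → A := fun w =>
  ∑ i ∈ Finset.range (w.length + 1), ∑ j ∈ Finset.Icc i w.length,
    f (w.take i ++ w.drop j) * g ((w.drop i).take (j - i))

/-- The associated bracket `[f,g] := f ◁ g − g ◁ f`. -/
def bracket [CommRing A] (f g : Word → A) : Word → A := tri f g - tri g f

open Finset

def List.excise {α : Type*} (w : List α) (i j : ℕ) : List α := w.take i ++ w.drop j

namespace List

variable {α : Type*} (w : List α) {p q a b : ℕ}

theorem length_excise (hpq : p ≤ q) (hq : q ≤ w.length) :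
    (w.excise p q).length = w.length - (q - p) := by
  simp only [excise, length_append, length_take, length_drop]
  omega

theorem length_extract_of_le (hq : q ≤ w.length) : (w.extract p q).length = q - p := by
  simp only [extract_eq_take_drop, length_take, length_drop]
  omega

theorem excise_excise_of_le (hab : a ≤ b) (hb : b ≤ p) (hpq : p ≤ q) (hq : q ≤ w.length) :
    (w.excise p q).excise a b = w.take a ++ w.extract b p ++ w.drop q := by
  ext1 i
  simp only [excise, getElem?_append, getElem?_take, getElem?_drop, length_take, length_drop,
    length_append, extract_eq_take_drop, append_assoc]
  split_ifs <;> first | rfl | (congr 1; omega)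

theorem extract_excise_of_le (hb : b ≤ p) (hpq : p ≤ q) (hq : q ≤ w.length) :
    (w.excise p q).extract a b = w.extract a b := by
  ext1 i
  simp only [excise, getElem?_append, getElem?_take, getElem?_drop, length_take,
    extract_eq_take_drop]
  split_ifs <;> first | rfl | (congr 1; omega)

theorem excise_excise_of_le_of_ge (ha : a ≤ p) (hb : p ≤ b) (hpq : p ≤ q) (hq : q ≤ w.length) :
    (w.excise p q).excise a b = w.excise a (q + b - p) := by
  ext1 i
  simp only [excise, getElem?_append, getElem?_take, getElem?_drop, length_take, length_drop,
    length_append]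
  split_ifs <;> first | rfl | (congr 1; omega)

theorem extract_excise_of_le_of_ge (ha : a ≤ p) (hb : p ≤ b) (hpq : p ≤ q) (hq : q ≤ w.length) :
    (w.excise p q).extract a b = w.extract a p ++ w.extract q (q + b - p) := by
  ext1 i
  simp only [excise, getElem?_append, getElem?_take, getElem?_drop, length_take, length_drop,
    extract_eq_take_drop]
  split_ifs <;> first | rfl | (congr 1; omega)

theorem excise_excise_of_ge (hab : a ≤ b) (ha : p ≤ a) (hpq : p ≤ q) (hq : q ≤ w.length) :
    (w.excise p q).excise a b = w.take p ++ w.extract q (q + a - p) ++ w.drop (q + b - p) := by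
  ext1 i
  simp only [excise, getElem?_append, getElem?_take, getElem?_drop, length_take, length_drop,
    length_append, extract_eq_take_drop, append_assoc]
  split_ifs <;> first | rfl | (congr 1; omega)

theorem extract_excise_of_ge (ha : p ≤ a) (hpq : p ≤ q) (hq : q ≤ w.length) :
    (w.excise p q).extract a b = w.extract (q + a - p) (q + b - p) := by
  ext1 i
  simp only [excise, getElem?_append, getElem?_take, getElem?_drop, length_take,
    extract_eq_take_drop]
  split_ifs <;> first | rfl | (congr 1; omega)

theorem excise_extract (hab : a ≤ b) (hb : b ≤ q - p) :
    (w.extract p q).excise a b = w.extract p (p + a) ++ w.extract (p + b) q := by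
  ext1 i
  simp only [excise, getElem?_append, getElem?_take, getElem?_drop, length_take, length_drop,
    extract_eq_take_drop]
  split_ifs <;> first | rfl | (congr 1; omega)

theorem extract_extract (hb : b ≤ q - p) :
    (w.extract p q).extract a b = w.extract (p + a) (p + b) := by
  ext1 i
  simp only [getElem?_take, getElem?_drop, extract_eq_take_drop]
  split_ifs <;> first | rfl | (congr 1; omega)

end List

def intervals (n : ℕ) : Finset (ℕ × ℕ) := (Iic (n, n)).filter fun I => I.1 ≤ I.2

@[simp]
theorem mem_intervals {n : ℕ} {I : ℕ × ℕ} : I ∈ intervals n ↔ I.1 ≤ I.2 ∧ I.2 ≤ n := by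
  simp only [intervals, mem_filter, mem_Iic, Prod.le_def]
  omega

def separatedIntervals (n : ℕ) : Finset ((ℕ × ℕ) × (ℕ × ℕ)) :=
  (intervals n ×ˢ intervals n).filter fun P => P.1.2 < P.2.1

def nestedIntervals (n : ℕ) : Finset ((ℕ × ℕ) × (ℕ × ℕ)) :=
  (intervals n ×ˢ intervals n).filter fun P => P.1.1 ≤ P.2.1 ∧ P.2.2 ≤ P.1.2

@[simp]
theorem mem_separatedIntervals {n : ℕ} {P : (ℕ × ℕ) × (ℕ × ℕ)} :
    P ∈ separatedIntervals n ↔ P.1.1 ≤ P.1.2 ∧ P.1.2 < P.2.1 ∧ P.2.1 ≤ P.2.2 ∧ P.2.2 ≤ n := by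
  simp only [separatedIntervals, mem_filter, mem_product, mem_intervals]
  omega

@[simp]
theorem mem_nestedIntervals {n : ℕ} {P : (ℕ × ℕ) × (ℕ × ℕ)} :
    P ∈ nestedIntervals n ↔ P.1.1 ≤ P.2.1 ∧ P.2.1 ≤ P.2.2 ∧ P.2.2 ≤ P.1.2 ∧ P.1.2 ≤ n := by
  simp only [nestedIntervals, mem_filter, mem_product, mem_intervals]
  omega

section Insertion

variable [CommRing A] (f g h : Word → A) (w : Word)

def separatedInsertion : A :=
  ∑ P ∈ separatedIntervals w.length,
    f (w.take P.1.1 ++ w.extract P.1.2 P.2.1 ++ w.drop P.2.2) * g (w.extract P.1.1 P.1.2) *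
      h (w.extract P.2.1 P.2.2)

def nestedInsertion : A :=
  ∑ P ∈ nestedIntervals w.length,
    f (w.excise P.1.1 P.1.2) * g (w.extract P.1.1 P.2.1 ++ w.extract P.2.2 P.1.2) *
      h (w.extract P.2.1 P.2.2)

/-- The terms of `(f ◁ g) ◁ h` at `w`: `h` takes the slot `I` of `w`, then `g` the slot `J` of
what is left. -/
def iteratedTerm (I J : ℕ × ℕ) : A :=
  f ((w.excise I.1 I.2).excise J.1 J.2) * g ((w.excise I.1 I.2).extract J.1 J.2) *
    h (w.extract I.1 I.2)

theorem tri_apply :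
    tri f g w = ∑ I ∈ intervals w.length, f (w.excise I.1 I.2) * g (w.extract I.1 I.2) :=
  (sum_finset_product' _ _ _ fun I => by simp only [mem_intervals, mem_range, mem_Icc]; omega).symm

theorem tri_tri_apply_right : tri f (tri g h) w = nestedInsertion f g h w := by
  have expand_inner : ∀ I ∈ intervals w.length,
      f (w.excise I.1 I.2) * tri g h (w.extract I.1 I.2) =
        ∑ J ∈ intervals (I.2 - I.1), f (w.excise I.1 I.2) *
          (g ((w.extract I.1 I.2).excise J.1 J.2) * h ((w.extract I.1 I.2).extract J.1 J.2)) := by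
    intro I hI
    rw [tri_apply, List.length_extract_of_le _ (mem_intervals.1 hI).2, mul_sum]
  rw [tri_apply, sum_congr rfl expand_inner, sum_sigma', nestedInsertion]
  refine sum_nbij' (fun P => (P.1, P.1.1 + P.2.1, P.1.1 + P.2.2))
    (fun P => ⟨P.1, P.2.1 - P.1.1, P.2.2 - P.1.1⟩) ?_ ?_ ?_ ?_ ?_
  · rintro ⟨⟨p, q⟩, a, b⟩ hP
    simp only [mem_sigma, mem_intervals, mem_nestedIntervals] at hP ⊢
    omega
  · rintro ⟨⟨i, l⟩, j, k⟩ hP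
    simp only [mem_sigma, mem_intervals, mem_nestedIntervals] at hP ⊢
    omega
  · rintro ⟨⟨p, q⟩, a, b⟩ -
    simp only [add_tsub_cancel_left]
  · rintro ⟨⟨i, l⟩, j, k⟩ hP
    simp only [mem_nestedIntervals] at hP
    simp only [Prod.mk.injEq, true_and]
    omega
  · rintro ⟨⟨p, q⟩, a, b⟩ hP
    obtain ⟨-, hab, hb⟩ := by simpa only [mem_sigma, mem_intervals] using hP
    dsimp only
    rw [List.excise_extract _ hab hb, List.extract_extract _ hb, mul_assoc]

theorem sum_iteratedTerm_filter_left :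
    ∑ I ∈ intervals w.length,
      ∑ J ∈ (intervals (w.length - (I.2 - I.1))).filter (fun J => J.2 < I.1),
        iteratedTerm f g h w I J = separatedInsertion f g h w := by
  rw [sum_sigma', separatedInsertion]
  refine sum_nbij' (fun P => (P.2, P.1)) (fun P => ⟨P.2, P.1⟩) ?_ ?_ ?_ ?_ ?_
  · rintro ⟨⟨p, q⟩, a, b⟩ hP
    simp only [mem_sigma, mem_filter, mem_intervals, mem_separatedIntervals] at hP ⊢
    omega
  · rintro ⟨⟨a, b⟩, p, q⟩ hP
    simp only [mem_sigma, mem_filter, mem_intervals, mem_separatedIntervals] at hP ⊢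
    omega
  · intro P _
    rfl
  · intro P _
    rfl
  · rintro ⟨⟨p, q⟩, a, b⟩ hP
    obtain ⟨⟨hpq, hq⟩, ⟨hab, -⟩, hbp⟩ :=
      by simpa only [mem_sigma, mem_filter, mem_intervals] using hP
    dsimp only
    rw [iteratedTerm, List.excise_excise_of_le _ hab hbp.le hpq hq,
      List.extract_excise_of_le _ hbp.le hpq hq]

theorem sum_iteratedTerm_filter_around :
    ∑ I ∈ intervals w.length,
      ∑ J ∈ (intervals (w.length - (I.2 - I.1))).filter (fun J => J.1 ≤ I.1 ∧ I.1 ≤ J.2),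
        iteratedTerm f g h w I J = nestedInsertion f g h w := by
  rw [sum_sigma', nestedInsertion]
  refine sum_nbij' (fun P => ((P.2.1, P.1.2 + P.2.2 - P.1.1), P.1))
    (fun P => ⟨P.2, P.1.1, P.1.2 - (P.2.2 - P.2.1)⟩) ?_ ?_ ?_ ?_ ?_
  · rintro ⟨⟨p, q⟩, a, b⟩ hP
    simp only [mem_sigma, mem_filter, mem_intervals, mem_nestedIntervals] at hP ⊢
    omega
  · rintro ⟨⟨i, l⟩, j, k⟩ hP
    simp only [mem_sigma, mem_filter, mem_intervals, mem_nestedIntervals] at hP ⊢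
    omega
  · rintro ⟨⟨p, q⟩, a, b⟩ hP
    simp only [mem_sigma, mem_filter, mem_intervals] at hP
    simp only [Sigma.mk.injEq, heq_eq_eq, Prod.mk.injEq, true_and]
    omega
  · rintro ⟨⟨i, l⟩, j, k⟩ hP
    simp only [mem_nestedIntervals] at hP
    simp only [Prod.mk.injEq, true_and, and_true]
    omega
  · rintro ⟨⟨p, q⟩, a, b⟩ hP
    obtain ⟨⟨hpq, hq⟩, -, hap, hpb⟩ :=
      by simpa only [mem_sigma, mem_filter, mem_intervals] using hP
    dsimp only
    rw [iteratedTerm, List.excise_excise_of_le_of_ge _ hap hpb hpq hq,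
      List.extract_excise_of_le_of_ge _ hap hpb hpq hq]

theorem sum_iteratedTerm_filter_right :
    ∑ I ∈ intervals w.length,
      ∑ J ∈ (intervals (w.length - (I.2 - I.1))).filter (fun J => I.1 < J.1),
        iteratedTerm f g h w I J = separatedInsertion f h g w := by
  rw [sum_sigma', separatedInsertion]
  refine sum_nbij' (fun P => (P.1, P.1.2 + P.2.1 - P.1.1, P.1.2 + P.2.2 - P.1.1))
    (fun P => ⟨P.1, P.2.1 - (P.1.2 - P.1.1), P.2.2 - (P.1.2 - P.1.1)⟩) ?_ ?_ ?_ ?_ ?_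
  · rintro ⟨⟨p, q⟩, a, b⟩ hP
    simp only [mem_sigma, mem_filter, mem_intervals, mem_separatedIntervals] at hP ⊢
    omega
  · rintro ⟨⟨i, j⟩, k, l⟩ hP
    simp only [mem_sigma, mem_filter, mem_intervals, mem_separatedIntervals] at hP ⊢
    omega
  · rintro ⟨⟨p, q⟩, a, b⟩ hP
    simp only [mem_sigma, mem_filter, mem_intervals] at hP
    simp only [Sigma.mk.injEq, heq_eq_eq, Prod.mk.injEq, true_and]
    omega
  · rintro ⟨⟨i, j⟩, k, l⟩ hP
    simp only [mem_separatedIntervals] at hP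
    simp only [Prod.mk.injEq, true_and]
    omega
  · rintro ⟨⟨p, q⟩, a, b⟩ hP
    obtain ⟨⟨hpq, hq⟩, ⟨hab, -⟩, hpa⟩ :=
      by simpa only [mem_sigma, mem_filter, mem_intervals] using hP
    dsimp only
    rw [iteratedTerm, List.excise_excise_of_ge _ hab hpa.le hpq hq,
      List.extract_excise_of_ge _ hpa.le hpq hq, mul_right_comm]

theorem tri_tri_apply_left :
    tri (tri f g) h w =
      separatedInsertion f g h w + nestedInsertion f g h w + separatedInsertion f h g w := by
  rw [← sum_iteratedTerm_filter_left, ← sum_iteratedTerm_filter_around,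
    ← sum_iteratedTerm_filter_right, ← sum_add_distrib, ← sum_add_distrib, tri_apply]
  refine sum_congr rfl fun I hI => ?_
  rw [mem_intervals] at hI
  rw [tri_apply, List.length_excise _ hI.1 hI.2, sum_mul]
  simp only [sum_filter, ← sum_add_distrib]
  refine sum_congr rfl fun J hJ => ?_
  rw [mem_intervals] at hJ
  split_ifs <;> first | omega | (simp only [add_zero, zero_add]; rfl)

theorem tri_tri_sub_tri_tri :
    tri (tri f g) h - tri f (tri g h) =
      fun w => separatedInsertion f g h w + separatedInsertion f h g w := by
  funext w
  rw [Pi.sub_apply, tri_tri_apply_left, tri_tri_apply_right]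
  ring

theorem tri_preLie : tri (tri f g) h - tri f (tri g h) = tri (tri f h) g - tri f (tri h g) := by
  rw [tri_tri_sub_tri_tri, tri_tri_sub_tri_tri]
  funext w
  exact add_comm _ _

theorem sub_tri : tri (f - g) h = tri f h - tri g h := by
  funext w
  simp only [tri, Pi.sub_apply, sub_mul, sum_sub_distrib]

theorem tri_sub : tri f (g - h) = tri f g - tri f h := by
  funext w
  simp only [tri, Pi.sub_apply, mul_sub, sum_sub_distrib]

theorem bracket_jacobi :
    bracket (bracket f g) h + bracket (bracket g h) f + bracket (bracket h f) g = 0 := by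
  simp only [bracket, sub_tri, tri_sub]
  linear_combination tri_preLie f g h + tri_preLie g h f + tri_preLie h f g

end Insertion

theorem stmt5_general [CommRing A] (f g h : Word → A) :
    (tri (tri f g) h - tri f (tri g h) = tri (tri f h) g - tri f (tri h g)) ∧
    (bracket (bracket f g) h + bracket (bracket g h) f + bracket (bracket h f) g = 0) :=
  ⟨tri_preLie f g h, bracket_jacobi f g h⟩

/-- `◁` satisfies the right pre-Lie identity on `G^0` (series with zero
constant coefficient), and consequently the bracket `[f,g] = f ◁ g − g ◁ f` satisfies the
Jacobi identity, so `G^0` is a Lie algebra. -/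
theorem stmt5 [CommRing A] (f g h : Word → A)
    (hf : f [] = 0) (hg : g [] = 0) (hh : h [] = 0) :
    (tri (tri f g) h - tri f (tri g h) = tri (tri f h) g - tri f (tri h g)) ∧
    (bracket (bracket f g) h + bracket (bracket g h) f + bracket (bracket h f) g = 0) :=
  stmt5_general f g h
end

section
/- For all f, g, h ∈ G^0 and every word w, the pre-Lie associator satisfies ((f ◁ g) ◁ h − f ◁ (g ◁ h))(w) = Σ f(u v s)·(g(q)h(r) + h(q)g(r)), where the sum runs over all factorizations w = u q v r s into five consecutive factors with the middle factor v nonempty (and u, q, r, s possibly empty). In particular the associator is symmetric in g and h. -/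
variable {A : Type*}

/-- The factor of `w` occupying positions `a, a+1, …, b-1`. -/
def wfactor (w : Word) (a b : ℕ) : Word := (w.drop a).take (b - a)

/-! Both iterated products are sums over two successive cuts. In `((f ◁ g) ◁ h)(w)` one cuts the
factor for `h` out of `w` and then the factor for `g` out of the rest. If the `g`-factor lies
strictly before or strictly after the junction left by the first cut, then in `w` the two factors
are separated by a nonempty word: these are the `g … h` and `h … g` terms of the right-hand side.
Otherwise the `g`-factor reads `q₁ q₂` with `w = u q₁ q q₂ v`, `q` the `h`-factor, which is exactly
the term of `(f ◁ (g ◁ h))(w)` cutting `q₁ q q₂` out of `w` and then `q` out of `q₁ q q₂`. -/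

open Finset

section Excision

variable (w : Word) {p q i j : ℕ}

lemma length_take_append_drop (hpq : p ≤ q) (hq : q ≤ w.length) :
    (w.take p ++ w.drop q).length = w.length - (q - p) := by
  simp only [List.length_append, List.length_take, List.length_drop]; omega

lemma take_take_append_drop_of_le (hi : i ≤ p) (hp : p ≤ w.length) :
    (w.take p ++ w.drop q).take i = w.take i := by
  rw [List.take_append_of_le_length (by simp; omega), List.take_take, min_eq_left hi]

lemma take_take_append_drop_of_ge (hi : p ≤ i) (hp : p ≤ w.length) :
    (w.take p ++ w.drop q).take i = w.take p ++ wfactor w q (q + (i - p)) := by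
  rw [List.take_append, List.take_of_length_le (by simp; omega), List.length_take_of_le hp,
    wfactor, Nat.add_sub_cancel_left]

lemma drop_take_append_drop_of_le (hj : j ≤ p) (hp : p ≤ w.length) :
    (w.take p ++ w.drop q).drop j = wfactor w j p ++ w.drop q := by
  rw [List.drop_append_of_le_length (by simp; omega), List.drop_take]; rfl

lemma drop_take_append_drop_of_ge (hj : p ≤ j) (hp : p ≤ w.length) :
    (w.take p ++ w.drop q).drop j = w.drop (q + (j - p)) := by
  rw [List.drop_append, List.drop_eq_nil_of_le (by simp; omega), List.length_take_of_le hp,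
    List.drop_drop, List.nil_append]

lemma length_wfactor {a b : ℕ} (hb : b ≤ w.length) : (wfactor w a b).length = b - a := by
  simp only [wfactor, List.length_take, List.length_drop]; omega

lemma take_wfactor {a b c : ℕ} (hab : a ≤ b) (hbc : b ≤ c) :
    (wfactor w a c).take (b - a) = wfactor w a b := by
  rw [wfactor, List.take_take, min_eq_left (by omega), wfactor]

lemma drop_wfactor {a b c : ℕ} (hab : a ≤ b) :
    (wfactor w a c).drop (b - a) = wfactor w b c := by
  rw [wfactor, List.drop_take, List.drop_drop, wfactor, Nat.add_sub_cancel' hab]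
  congr 1; omega

lemma wfactor_wfactor {a b c d : ℕ} (hab : a ≤ b) (hdc : d ≤ c) :
    wfactor (wfactor w a c) (b - a) (d - a) = wfactor w b d := by
  rw [wfactor, drop_wfactor w hab, wfactor, wfactor, List.take_take]
  congr 1; omega

lemma wfactor_take_append_drop_of_le (hij : i ≤ j) (hj : j ≤ p) (hp : p ≤ w.length) :
    wfactor (w.take p ++ w.drop q) i j = wfactor w i j := by
  rw [wfactor, drop_take_append_drop_of_le w (hij.trans hj) hp,
    List.take_append_of_le_length (by simp [wfactor]; omega), take_wfactor w hij hj]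

lemma wfactor_take_append_drop_of_ge (hi : p ≤ i) (hp : p ≤ w.length) :
    wfactor (w.take p ++ w.drop q) i j = wfactor w (q + (i - p)) (q + (j - p)) := by
  rw [wfactor, drop_take_append_drop_of_ge w hi hp, wfactor,
    show q + (j - p) - (q + (i - p)) = j - i by omega]

lemma wfactor_take_append_drop_of_le_of_ge (hi : i ≤ p) (hj : p ≤ j) (hp : p ≤ w.length) :
    wfactor (w.take p ++ w.drop q) i j = wfactor w i p ++ wfactor w q (q + (j - p)) := by
  rw [wfactor, drop_take_append_drop_of_le w hi hp, List.take_append,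
    List.take_of_length_le (by simp [wfactor]; omega)]
  simp only [wfactor, List.length_take, List.length_drop, Nat.add_sub_cancel_left]
  rw [min_eq_left (by omega), Nat.sub_sub_sub_cancel_right hi]

end Excision

def cuts (n : ℕ) : Finset (ℕ × ℕ) :=
  (range (n + 1) ×ˢ range (n + 1)).filter fun x => x.1 ≤ x.2

@[simp]
lemma mem_cuts {n : ℕ} {x : ℕ × ℕ} : x ∈ cuts n ↔ x.1 ≤ x.2 ∧ x.2 ≤ n := by
  simp only [cuts, mem_filter, mem_product, mem_range]; omega

section Sums

variable {M : Type*} [AddCommMonoid M]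

lemma sum_range_sum_Icc_eq_sum_cuts (n : ℕ) (F : ℕ → ℕ → M) :
    ∑ i ∈ range (n + 1), ∑ j ∈ Icc i n, F i j = ∑ x ∈ cuts n, F x.1 x.2 :=
  (sum_finset_product' _ _ _ fun x => by simp only [mem_cuts, mem_range, mem_Icc]; omega).symm

lemma sum_Ioc_sum_Icc_eq_sum_cuts (n k : ℕ) (F : ℕ → ℕ → M) :
    ∑ i ∈ Ioc k n, ∑ j ∈ Icc i n, F i j = ∑ y ∈ (cuts n).filter (k < ·.1), F y.1 y.2 :=
  (sum_finset_product' _ _ _ fun y => by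
    simp only [mem_filter, mem_cuts, mem_Ioc, mem_Icc]; omega).symm

lemma sum_cuts_sum_cuts {n : ℕ} (b : ℕ × ℕ → ℕ) (hb : ∀ x ∈ cuts n, b x ≤ n)
    (F : (ℕ × ℕ) × ℕ × ℕ → M) :
    ∑ x ∈ cuts n, ∑ y ∈ cuts (b x), F (x, y) =
      ∑ z ∈ (cuts n ×ˢ cuts n).filter (fun z => z.2.2 ≤ b z.1), F z :=
  (sum_finset_product _ _ _ fun z => by
    simp only [mem_filter, mem_product, mem_cuts]
    constructor
    · omega
    · rintro ⟨⟨hx₁, hx₂⟩, hy⟩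
      have := hb z.1 (mem_cuts.2 ⟨hx₁, hx₂⟩)
      omega).symm

end Sums

/- `((p, q), (i, j))` encodes cutting `[p, q)` out of a word of length `n`, then `[i, j)` out of
the remaining word (`leftNestedCuts`), or out of the factor `[p, q)` itself (`rightNestedCuts`);
in `separatedCuts` both are factors of the same word, `[i, j)` to the right of `[p, q)`. -/
def leftNestedCuts (n : ℕ) : Finset ((ℕ × ℕ) × ℕ × ℕ) :=
  (cuts n ×ˢ cuts n).filter fun z => z.2.2 ≤ n - (z.1.2 - z.1.1)

def rightNestedCuts (n : ℕ) : Finset ((ℕ × ℕ) × ℕ × ℕ) :=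
  (cuts n ×ˢ cuts n).filter fun z => z.2.2 ≤ z.1.2 - z.1.1

def separatedCuts (n : ℕ) : Finset ((ℕ × ℕ) × ℕ × ℕ) :=
  (cuts n ×ˢ cuts n).filter fun z => z.1.2 < z.2.1

@[simp]
lemma mem_leftNestedCuts {n : ℕ} {z : (ℕ × ℕ) × ℕ × ℕ} : z ∈ leftNestedCuts n ↔
    z.1.1 ≤ z.1.2 ∧ z.1.2 ≤ n ∧ z.2.1 ≤ z.2.2 ∧ z.2.2 ≤ n - (z.1.2 - z.1.1) := by
  simp only [leftNestedCuts, mem_filter, mem_product, mem_cuts]; omega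

@[simp]
lemma mem_rightNestedCuts {n : ℕ} {z : (ℕ × ℕ) × ℕ × ℕ} : z ∈ rightNestedCuts n ↔
    z.1.1 ≤ z.1.2 ∧ z.1.2 ≤ n ∧ z.2.1 ≤ z.2.2 ∧ z.2.2 ≤ z.1.2 - z.1.1 := by
  simp only [rightNestedCuts, mem_filter, mem_product, mem_cuts]; omega

@[simp]
lemma mem_separatedCuts {n : ℕ} {z : (ℕ × ℕ) × ℕ × ℕ} : z ∈ separatedCuts n ↔
    z.1.1 ≤ z.1.2 ∧ z.1.2 < z.2.1 ∧ z.2.1 ≤ z.2.2 ∧ z.2.2 ≤ n := by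
  simp only [separatedCuts, mem_filter, mem_product, mem_cuts]; omega

lemma sum_separatedCuts {M : Type*} [AddCommMonoid M] (n : ℕ) (F : ℕ → ℕ → ℕ → ℕ → M) :
    ∑ i₁ ∈ range (n + 1), ∑ i₂ ∈ Icc i₁ n, ∑ i₃ ∈ Ioc i₂ n, ∑ i₄ ∈ Icc i₃ n, F i₁ i₂ i₃ i₄ =
      ∑ z ∈ separatedCuts n, F z.1.1 z.1.2 z.2.1 z.2.2 := by
  simp_rw [sum_Ioc_sum_Icc_eq_sum_cuts, sum_range_sum_Icc_eq_sum_cuts]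
  exact (sum_finset_product' _ _ _ fun z => by
    simp only [mem_separatedCuts, mem_filter, mem_cuts]; omega).symm

section Associator

variable [CommRing A] (f g h : Word → A) (w : Word)

def leftNestedTerm (z : (ℕ × ℕ) × ℕ × ℕ) : A :=
  f ((w.take z.1.1 ++ w.drop z.1.2).take z.2.1 ++ (w.take z.1.1 ++ w.drop z.1.2).drop z.2.2) *
    g (wfactor (w.take z.1.1 ++ w.drop z.1.2) z.2.1 z.2.2) * h (wfactor w z.1.1 z.1.2)

def rightNestedTerm (z : (ℕ × ℕ) × ℕ × ℕ) : A :=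
  f (w.take z.1.1 ++ w.drop z.1.2) *
    (g ((wfactor w z.1.1 z.1.2).take z.2.1 ++ (wfactor w z.1.1 z.1.2).drop z.2.2) *
      h (wfactor (wfactor w z.1.1 z.1.2) z.2.1 z.2.2))

def separatedTerm (z : (ℕ × ℕ) × ℕ × ℕ) : A :=
  f (w.take z.1.1 ++ wfactor w z.1.2 z.2.1 ++ w.drop z.2.2) *
    (g (wfactor w z.1.1 z.1.2) * h (wfactor w z.2.1 z.2.2))

lemma tri_apply_s6 :
    tri f g w = ∑ x ∈ cuts w.length, f (w.take x.1 ++ w.drop x.2) * g (wfactor w x.1 x.2) :=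
  sum_range_sum_Icc_eq_sum_cuts _ _

lemma tri_tri_left_apply :
    tri (tri f g) h w = ∑ z ∈ leftNestedCuts w.length, leftNestedTerm f g h w z := by
  rw [tri_apply_s6, leftNestedCuts,
    ← sum_cuts_sum_cuts (fun x => w.length - (x.2 - x.1)) fun x _ => Nat.sub_le _ _]
  refine sum_congr rfl fun x hx => ?_
  rw [tri_apply_s6, sum_mul, length_take_append_drop w (mem_cuts.1 hx).1 (mem_cuts.1 hx).2]
  rfl

lemma tri_tri_right_apply :
    tri f (tri g h) w = ∑ z ∈ rightNestedCuts w.length, rightNestedTerm f g h w z := by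
  rw [tri_apply_s6, rightNestedCuts,
    ← sum_cuts_sum_cuts (fun x => x.2 - x.1) fun x hx => (Nat.sub_le _ _).trans (mem_cuts.1 hx).2]
  refine sum_congr rfl fun x hx => ?_
  rw [tri_apply_s6, mul_sum, length_wfactor w (mem_cuts.1 hx).2]
  rfl

lemma sum_leftNestedTerm_of_lt :
    ∑ z ∈ (leftNestedCuts w.length).filter (fun z => z.2.2 < z.1.1), leftNestedTerm f g h w z =
      ∑ z ∈ separatedCuts w.length, separatedTerm f g h w z := by
  refine sum_nbij' (fun z => (z.2, z.1)) (fun z => (z.2, z.1)) ?_ ?_ (fun _ _ => rfl)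
    (fun _ _ => rfl) ?_
  · rintro ⟨⟨p, q⟩, i, j⟩ hz
    simp only [mem_filter, mem_leftNestedCuts, mem_separatedCuts] at hz ⊢; omega
  · rintro ⟨⟨i, j⟩, p, q⟩ hz
    simp only [mem_filter, mem_leftNestedCuts, mem_separatedCuts] at hz ⊢; omega
  · rintro ⟨⟨p, q⟩, i, j⟩ hz
    simp only [mem_filter, mem_leftNestedCuts] at hz
    simp only [leftNestedTerm, separatedTerm]
    rw [take_take_append_drop_of_le w (by omega) (by omega),
      drop_take_append_drop_of_le w (by omega) (by omega),
      wfactor_take_append_drop_of_le w (by omega) (by omega) (by omega), List.append_assoc]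
    ring

lemma sum_leftNestedTerm_of_gt :
    ∑ z ∈ (leftNestedCuts w.length).filter (fun z => z.1.1 < z.2.1), leftNestedTerm f g h w z =
      ∑ z ∈ separatedCuts w.length, separatedTerm f h g w z := by
  refine sum_nbij' (fun z => (z.1, z.1.2 + (z.2.1 - z.1.1), z.1.2 + (z.2.2 - z.1.1)))
    (fun z => (z.1, z.1.1 + (z.2.1 - z.1.2), z.1.1 + (z.2.2 - z.1.2))) ?_ ?_ ?_ ?_ ?_
  · rintro ⟨⟨p, q⟩, i, j⟩ hz
    simp only [mem_filter, mem_leftNestedCuts, mem_separatedCuts] at hz ⊢; omega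
  · rintro ⟨⟨p, q⟩, i, j⟩ hz
    simp only [mem_filter, mem_leftNestedCuts, mem_separatedCuts] at hz ⊢; omega
  · rintro ⟨⟨p, q⟩, i, j⟩ hz
    simp only [mem_filter, mem_leftNestedCuts, Prod.mk.injEq, true_and] at hz ⊢; omega
  · rintro ⟨⟨p, q⟩, i, j⟩ hz
    simp only [mem_separatedCuts, Prod.mk.injEq, true_and] at hz ⊢; omega
  · rintro ⟨⟨p, q⟩, i, j⟩ hz
    simp only [mem_filter, mem_leftNestedCuts] at hz
    simp only [leftNestedTerm, separatedTerm]
    rw [take_take_append_drop_of_ge w (by omega) (by omega),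
      drop_take_append_drop_of_ge w (by omega) (by omega),
      wfactor_take_append_drop_of_ge w (by omega) (by omega)]
    ring

lemma sum_leftNestedTerm_of_le_of_le :
    ∑ z ∈ (leftNestedCuts w.length).filter (fun z => z.2.1 ≤ z.1.1 ∧ z.1.1 ≤ z.2.2),
        leftNestedTerm f g h w z =
      ∑ z ∈ rightNestedCuts w.length, rightNestedTerm f g h w z := by
  refine sum_nbij' (fun z => ((z.2.1, z.1.2 + (z.2.2 - z.1.1)), (z.1.1 - z.2.1, z.1.2 - z.2.1)))
    (fun z => ((z.1.1 + z.2.1, z.1.1 + z.2.2), (z.1.1, z.2.1 + (z.1.2 - z.2.2))))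
    ?_ ?_ ?_ ?_ ?_
  · rintro ⟨⟨p, q⟩, i, j⟩ hz
    simp only [mem_filter, mem_leftNestedCuts, mem_rightNestedCuts] at hz ⊢; omega
  · rintro ⟨⟨p, q⟩, i, j⟩ hz
    simp only [mem_filter, mem_leftNestedCuts, mem_rightNestedCuts] at hz ⊢; omega
  · rintro ⟨⟨p, q⟩, i, j⟩ hz
    simp only [mem_filter, mem_leftNestedCuts, Prod.mk.injEq, true_and] at hz ⊢; omega
  · rintro ⟨⟨p, q⟩, i, j⟩ hz
    simp only [mem_rightNestedCuts, Prod.mk.injEq, true_and] at hz ⊢; omega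
  · rintro ⟨⟨p, q⟩, i, j⟩ hz
    simp only [mem_filter, mem_leftNestedCuts] at hz
    simp only [leftNestedTerm, rightNestedTerm]
    rw [take_take_append_drop_of_le w (by omega) (by omega),
      drop_take_append_drop_of_ge w (by omega) (by omega),
      wfactor_take_append_drop_of_le_of_ge w (by omega) (by omega) (by omega),
      take_wfactor w (by omega) (by omega), drop_wfactor w (by omega),
      wfactor_wfactor w (by omega) (by omega)]
    ring

lemma sum_leftNestedTerm_eq_add_add :
    ∑ z ∈ leftNestedCuts w.length, leftNestedTerm f g h w z =
      ∑ z ∈ (leftNestedCuts w.length).filter (fun z => z.2.2 < z.1.1), leftNestedTerm f g h w z +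
      ∑ z ∈ (leftNestedCuts w.length).filter (fun z => z.1.1 < z.2.1), leftNestedTerm f g h w z +
      ∑ z ∈ (leftNestedCuts w.length).filter (fun z => z.2.1 ≤ z.1.1 ∧ z.1.1 ≤ z.2.2),
        leftNestedTerm f g h w z := by
  rw [← sum_filter_add_sum_filter_not _ (fun z => z.2.2 < z.1.1), add_assoc]
  congr 1
  rw [← sum_filter_add_sum_filter_not _ (fun z => z.1.1 < z.2.1), filter_filter, filter_filter]
  congr 2 <;> refine filter_congr fun z hz => ?_ <;> simp only [mem_leftNestedCuts] at hz <;> omega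

theorem tri_tri_sub_tri_tri_apply :
    tri (tri f g) h w - tri f (tri g h) w =
      ∑ z ∈ separatedCuts w.length, (separatedTerm f g h w z + separatedTerm f h g w z) := by
  rw [tri_tri_left_apply, tri_tri_right_apply, sum_leftNestedTerm_eq_add_add,
    sum_leftNestedTerm_of_lt, sum_leftNestedTerm_of_gt, sum_leftNestedTerm_of_le_of_le,
    sum_add_distrib, add_sub_cancel_right]

end Associator

theorem stmt6_general [CommRing A] (f g h : Word → A) (w : Word) :
    (tri (tri f g) h w - tri f (tri g h) w =
      ∑ i₁ ∈ Finset.range (w.length + 1), ∑ i₂ ∈ Finset.Icc i₁ w.length,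
        ∑ i₃ ∈ Finset.Ioc i₂ w.length, ∑ i₄ ∈ Finset.Icc i₃ w.length,
          f (w.take i₁ ++ wfactor w i₂ i₃ ++ w.drop i₄) *
            (g (wfactor w i₁ i₂) * h (wfactor w i₃ i₄) +
              h (wfactor w i₁ i₂) * g (wfactor w i₃ i₄))) ∧
    (tri (tri f g) h - tri f (tri g h) = tri (tri f h) g - tri f (tri h g)) := by
  refine ⟨?_, funext fun v => ?_⟩
  · rw [tri_tri_sub_tri_tri_apply, sum_separatedCuts]
    exact sum_congr rfl fun z _ => (mul_add _ _ _).symm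
  · simp only [Pi.sub_apply, tri_tri_sub_tri_tri_apply, add_comm]

/-- for `f, g, h ∈ G^0` and every word `w`, the pre-Lie associator is
`((f ◁ g) ◁ h − f ◁ (g ◁ h))(w) = Σ f(u ++ v ++ s)·(g(q)h(r) + h(q)g(r))`, the sum running
over all factorizations `w = u ++ q ++ v ++ r ++ s` into five consecutive factors with `v`
nonempty.  In particular the associator is symmetric in `g` and `h`. -/
theorem stmt6 [CommRing A] (f g h : Word → A)
    (hf : f [] = 0) (hg : g [] = 0) (hh : h [] = 0) (w : Word) :
    (tri (tri f g) h w - tri f (tri g h) w =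
      ∑ i₁ ∈ Finset.range (w.length + 1), ∑ i₂ ∈ Finset.Icc i₁ w.length,
        ∑ i₃ ∈ Finset.Ioc i₂ w.length, ∑ i₄ ∈ Finset.Icc i₃ w.length,
          f (w.take i₁ ++ wfactor w i₂ i₃ ++ w.drop i₄) *
            (g (wfactor w i₁ i₂) * h (wfactor w i₃ i₄) +
              h (wfactor w i₁ i₂) * g (wfactor w i₃ i₄))) ∧
    (tri (tri f g) h - tri f (tri g h) = tri (tri f h) g - tri f (tri h g)) :=
  stmt6_general f g h w
end

section
/- In the free A-module on nonempty words, with ◁ the bilinear extension of the insertion product, the commutator of two basis words is given by internal insertions only: for u = a_1⋯a_n and v = b_1⋯b_m, u ◁ v − v ◁ u = Σ_{k=1}^{n−1} a_1⋯a_k b_1⋯b_m a_{k+1}⋯a_n − Σ_{l=1}^{m−1} b_1⋯b_l a_1⋯a_n b_{l+1}⋯b_m (the boundary insertions at the two ends cancel). -/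
variable {A : Type*}

theorem Finset.sum_range_succ_eq_add_add_sum_Ioo {M : Type*} [AddCommMonoid M] {n : ℕ}
    (hn : 1 ≤ n) (f : ℕ → M) :
    ∑ k ∈ range (n + 1), f k = f 0 + f n + ∑ k ∈ Ioo 0 n, f k := by
  rw [sum_range_succ, range_eq_Ico, sum_eq_sum_Ico_succ_bot hn, Ico_add_one_left_eq_Ioo]
  abel

/-- in the free `A`-module on (nonempty) words, with `◁` the bilinear extension
of the insertion product `u ◁ v = Σ_{k=0}^{n} u₁⋯u_k v u_{k+1}⋯u_n`, the commutator of two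
nonempty basis words `u` and `v` is given by the internal insertions only:
`u ◁ v − v ◁ u = Σ_{k=1}^{n−1} u₁⋯u_k v u_{k+1}⋯u_n − Σ_{l=1}^{m−1} v₁⋯v_l u v_{l+1}⋯v_m`
(the boundary insertions at the two ends cancel). -/
theorem stmt7 [CommRing A] (u v : Word) (hu : u ≠ []) (hv : v ≠ []) :
    (∑ k ∈ Finset.range (u.length + 1),
        Finsupp.single (u.take k ++ v ++ u.drop k) (1 : A))
      - (∑ l ∈ Finset.range (v.length + 1),
          Finsupp.single (v.take l ++ u ++ v.drop l) (1 : A))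
    = (∑ k ∈ Finset.Ioo 0 u.length,
        Finsupp.single (u.take k ++ v ++ u.drop k) (1 : A))
      - (∑ l ∈ Finset.Ioo 0 v.length,
          Finsupp.single (v.take l ++ u ++ v.drop l) (1 : A)) := by
  rw [Finset.sum_range_succ_eq_add_add_sum_Ioo (List.length_pos_iff.mpr hu),
    Finset.sum_range_succ_eq_add_add_sum_Ioo (List.length_pos_iff.mpr hv)]
  -- inserting `v` at the two ends of `u` gives `v ++ u` and `u ++ v`, and so does inserting
  -- `u` at the two ends of `v`
  simp only [List.take_zero, List.drop_zero, List.take_length, List.drop_length,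
    List.nil_append, List.append_nil]
  abel
end

section
/- For every series f with f(∅) = 0 and every g ∈ G^1, the Cauchy product of (g − 1) with the shifted substitution f(xg(x)) has coefficients given, on every nonempty word w = a_1⋯a_n, by ((g − 1)·f(xg(x)))(w) = Σ f(w_S) ∏_{i=1}^{m(S)} g(w_{J_i^S}), where the sum runs over all nonempty subsets S ⊆ {1,…,n} with 1 ∉ S. (This is the generating-series form of the right half-shuffle product φ ≻ γ of a linear form with a character.) -/
variable {A : Type*}

/-- The (possibly empty) factor of `w` occupying the positions strictly before every
element of `S` (for `S = ∅` this is all of `w`). -/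
def prefixGap (w : Word) (S : Finset ℕ) : Word :=
  ((w.zipIdx.map Prod.swap).filter (fun p => decide (∀ j ∈ S, p.1 < j))).map Prod.snd

namespace List

variable {α : Type*}

def filterIdx (w : List α) (q : ℕ → Bool) : List α :=
  ((w.zipIdx.map Prod.swap).filter (fun p => q p.1)).map Prod.snd

theorem filterIdx_congr {w : List α} {q q' : ℕ → Bool} (h : ∀ i < w.length, q i = q' i) :
    w.filterIdx q = w.filterIdx q' := by
  refine congrArg (map Prod.snd) (filter_congr fun ⟨i, a⟩ hp => h i ?_)
  obtain ⟨⟨b, j⟩, hm, he⟩ := mem_map.1 hp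
  cases he
  exact (mem_zipIdx' hm).1

theorem filterIdx_append (u v : List α) (q : ℕ → Bool) :
    (u ++ v).filterIdx q = u.filterIdx q ++ v.filterIdx (fun i => q (i + u.length)) := by
  have hv : (v.zipIdx u.length).map Prod.swap
      = (v.zipIdx.map Prod.swap).map (fun p => (p.1 + u.length, p.2)) := by
    rw [zipIdx_eq_map_add, map_map, map_map]
    congr 1
    ext ⟨a, i⟩ : 1
    simp [Nat.add_comm]
  rw [filterIdx, filterIdx, filterIdx, zipIdx_append, Nat.zero_add, map_append, hv, filter_append,
    map_append]
  congr 1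
  rw [filter_map, map_map]
  rfl

theorem filterIdx_eq_self {w : List α} {q : ℕ → Bool} (h : ∀ i < w.length, q i = true) :
    w.filterIdx q = w := by
  rw [filterIdx_congr (q' := fun _ => true) h]
  simp only [filterIdx, filter_true, map_map]
  exact zipIdx_map_fst 0 w

theorem filterIdx_eq_nil {w : List α} {q : ℕ → Bool} (h : ∀ i < w.length, q i = false) :
    w.filterIdx q = [] := by
  rw [filterIdx_congr (q' := fun _ => false) h]
  simp [filterIdx]

theorem filterIdx_eq_filterIdx_drop {w : List α} {q : ℕ → Bool} {k : ℕ} (hk : k ≤ w.length)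
    (h : ∀ i < k, q i = false) : w.filterIdx q = (w.drop k).filterIdx (fun i => q (i + k)) := by
  conv_lhs => rw [← take_append_drop k w]
  rw [filterIdx_append, length_take_of_le hk, filterIdx_eq_nil, nil_append]
  simpa [length_take_of_le hk] using h

theorem filterIdx_eq_take {w : List α} {q : ℕ → Bool} {k : ℕ} (hk : k ≤ w.length)
    (h : ∀ i < w.length, q i = decide (i < k)) : w.filterIdx q = w.take k := by
  conv_lhs => rw [← take_append_drop k w]
  rw [filterIdx_append, length_take_of_le hk, filterIdx_eq_self, filterIdx_eq_nil, append_nil]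
  · intro i hi
    rw [length_drop] at hi
    simpa using h (i + k) (by omega)
  · intro i hi
    rw [length_take_of_le hk] at hi
    simpa [hi] using h i (by omega)

end List

theorem subword_eq_filterIdx (w : Word) (S : Finset ℕ) :
    subword w S = w.filterIdx fun i => decide (i ∈ S) := rfl

theorem gapAfter_eq_filterIdx (w : Word) (S : Finset ℕ) (s : ℕ) :
    gapAfter w S s = w.filterIdx fun i => decide (s < i ∧ ∀ j ∈ S, j ≤ s ∨ i < j) := rfl

theorem prefixGap_eq_filterIdx (w : Word) (S : Finset ℕ) :
    prefixGap w S = w.filterIdx fun i => decide (∀ j ∈ S, i < j) := rfl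

theorem subword_map_add (w : Word) (T : Finset ℕ) {k : ℕ} (hk : k ≤ w.length) :
    subword w (T.map (addRightEmbedding k)) = subword (w.drop k) T := by
  rw [subword_eq_filterIdx, subword_eq_filterIdx]
  refine (List.filterIdx_eq_filterIdx_drop hk fun i hi => ?_).trans
    (List.filterIdx_congr fun i _ => ?_)
  · refine decide_eq_false fun h => ?_
    obtain ⟨j, -, rfl⟩ := Finset.mem_map.1 h
    simp at hi
  · simp

theorem gapAfter_map_add (w : Word) (T : Finset ℕ) {k : ℕ} (hk : k ≤ w.length) (s : ℕ) :
    gapAfter w (T.map (addRightEmbedding k)) (s + k) = gapAfter (w.drop k) T s := by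
  rw [gapAfter_eq_filterIdx, gapAfter_eq_filterIdx]
  refine (List.filterIdx_eq_filterIdx_drop hk fun i hi => ?_).trans
    (List.filterIdx_congr fun i _ => ?_)
  · exact decide_eq_false fun h => absurd h.1 (by omega)
  · simp

theorem prefixGap_map_add (w : Word) {T : Finset ℕ} (h0 : 0 ∈ T) {k : ℕ} (hk : k ≤ w.length) :
    prefixGap w (T.map (addRightEmbedding k)) = w.take k := by
  rw [prefixGap_eq_filterIdx]
  refine List.filterIdx_eq_take hk fun i _ => ?_
  simp only [Finset.mem_map, addRightEmbedding_apply, forall_exists_index, and_imp,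
    forall_apply_eq_imp_iff₂, decide_eq_decide]
  exact ⟨fun h => by simpa using h 0 h0, fun h a _ => by omega⟩

namespace Finset

theorem eq_of_map_addRightEmbedding_eq {k k' : ℕ} {T T' : Finset ℕ} (h0 : 0 ∈ T) (h0' : 0 ∈ T')
    (h : T.map (addRightEmbedding k) = T'.map (addRightEmbedding k')) : k = k' ∧ T = T' := by
  have le_of_map_eq {k k' : ℕ} {T T' : Finset ℕ} (h0 : 0 ∈ T)
      (h : T.map (addRightEmbedding k) = T'.map (addRightEmbedding k')) : k' ≤ k := by
    obtain ⟨j, -, hj⟩ := mem_map.1 (h ▸ mem_map_of_mem (addRightEmbedding k) h0)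
    simp only [addRightEmbedding_apply, zero_add] at hj
    omega
  obtain rfl : k = k' := le_antisymm (le_of_map_eq h0' h.symm) (le_of_map_eq h0 h)
  exact ⟨rfl, map_inj.1 h⟩

theorem map_addRightEmbedding_image_sub_min' {S : Finset ℕ} (hne : S.Nonempty) :
    (S.image (· - S.min' hne)).map (addRightEmbedding (S.min' hne)) = S := by
  rw [map_eq_image, image_image]
  refine (image_congr fun x hx => ?_).trans image_id
  exact Nat.sub_add_cancel (min'_le S x hx)

theorem sum_powerset_range_not_zero_eq_sum_min {M : Type*} [AddCommMonoid M] (n : ℕ)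
    (F : Finset ℕ → M) :
    ∑ S ∈ (range n).powerset.filter (fun S => S.Nonempty ∧ 0 ∉ S), F S =
      ∑ k ∈ Ico 1 n, ∑ T ∈ (range (n - k)).powerset.filter (fun T => 0 ∈ T),
        F (T.map (addRightEmbedding k)) := by
  rw [sum_sigma']
  symm
  refine sum_bij (fun p _ => p.2.map (addRightEmbedding p.1)) ?_ ?_ ?_ fun _ _ => rfl
  · rintro ⟨k, T⟩ hp
    simp only [mem_sigma, mem_Ico, mem_filter, mem_powerset, subset_iff, mem_range] at hp
    obtain ⟨⟨hk1, hkn⟩, hT, h0⟩ := hp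
    simp only [mem_filter, mem_powerset, subset_iff, mem_range, mem_map, addRightEmbedding_apply,
      forall_exists_index, and_imp]
    refine ⟨fun x y hy hx => ?_, ⟨k, mem_map.2 ⟨0, h0, zero_add k⟩⟩, fun ⟨x, _, hx⟩ => by omega⟩
    have := hT hy
    omega
  · rintro ⟨k₁, T₁⟩ hp₁ ⟨k₂, T₂⟩ hp₂ h
    obtain ⟨rfl, rfl⟩ := eq_of_map_addRightEmbedding_eq (mem_filter.1 (mem_sigma.1 hp₁).2).2
      (mem_filter.1 (mem_sigma.1 hp₂).2).2 h
    rfl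
  · intro S hS
    simp only [mem_filter, mem_powerset, subset_iff, mem_range] at hS
    obtain ⟨hSn, hne, h0⟩ := hS
    have hkS : S.min' hne ∈ S := min'_mem S hne
    refine ⟨⟨S.min' hne, S.image (· - S.min' hne)⟩, ?_, map_addRightEmbedding_image_sub_min' hne⟩
    simp only [mem_sigma, mem_Ico, mem_filter, mem_powerset, subset_iff, mem_image, mem_range,
      forall_exists_index, and_imp, forall_apply_eq_imp_iff₂]
    refine ⟨⟨Nat.one_le_iff_ne_zero.2 fun h => h0 (h ▸ hkS), hSn hkS⟩,
      fun x hx => ?_, ⟨_, hkS, Nat.sub_self _⟩⟩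
    have := hSn hx
    have := min'_le S x hx
    omega

end Finset

theorem cauchy_sub_one_subst [CommRing A] {f g : Word → A} (hf : f [] = 0) (hg : g [] = 1)
    (w : Word) :
    cauchy (fun u => g u - one u) (subst f g) w =
      ∑ k ∈ Finset.Ico 1 w.length, g (w.take k) * subst f g (w.drop k) := by
  symm
  refine Finset.sum_subset_zero_on_sdiff (fun k hk => ?_) (fun k hk => ?_) (fun k hk => ?_)
  · simp only [Finset.mem_Ico, Finset.mem_range] at hk ⊢
    omega
  · simp only [Finset.mem_sdiff, Finset.mem_Ico, Finset.mem_range] at hk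
    rcases Nat.eq_zero_or_pos k with rfl | hk0
    · simp [one, hg]
    · simp [List.drop_eq_nil_of_le (show w.length ≤ k by omega), subst, hf]
  · obtain ⟨hk1, hkn⟩ := Finset.mem_Ico.1 hk
    have hk' : w.take k ≠ [] :=
      List.ne_nil_of_length_pos (by rw [List.length_take_of_le hkn.le]; omega)
    simp [one, hk']

theorem stmt8_general [CommRing A] (f g : Word → A) (hf : f [] = 0) (hg : g [] = 1)
    (w : Word) :
    cauchy (fun u => g u - one u) (subst f g) w =
      ∑ S ∈ (Finset.range w.length).powerset.filter (fun S => S.Nonempty ∧ 0 ∉ S),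
        f (subword w S) * (g (prefixGap w S) * ∏ s ∈ S, g (gapAfter w S s)) := by
  rw [cauchy_sub_one_subst hf hg, Finset.sum_powerset_range_not_zero_eq_sum_min]
  refine Finset.sum_congr rfl fun k hk => ?_
  have hkw : k < w.length := (Finset.mem_Ico.1 hk).2
  have hdrop : w.drop k ≠ [] := by simpa using hkw
  rw [subst, if_neg hdrop, List.length_drop, Finset.mul_sum]
  refine Finset.sum_congr rfl fun T hT => ?_
  rw [subword_map_add w T hkw.le, prefixGap_map_add w (Finset.mem_filter.1 hT).2 hkw.le,
    Finset.prod_map]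
  simp only [addRightEmbedding_apply, gapAfter_map_add w T hkw.le]
  ring

/-- for `f` with `f(∅) = 0` and `g ∈ G^1`, the Cauchy product of `g − 1` with
the shifted substitution `f(xg(x))` has, on every nonempty word `w` of length `n`,
coefficient `Σ f(w_S) ∏ g(w_{J^S_i})`, summed over the nonempty subsets `S ⊆ {0,…,n-1}` not
containing the first position; the product is over the (maximal) intervals of the complement
of `S`, realized as the factor before the first element of `S` together with the factor
after each `s ∈ S`, the empty ones contributing `g(∅) = 1`.  (This is the generating-series
form of the right half-shuffle product `φ ≻ γ` of a linear form with a character.) -/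
theorem stmt8 [CommRing A] (f g : Word → A) (hf : f [] = 0) (hg : g [] = 1)
    (w : Word) (hw : w ≠ []) :
    cauchy (fun u => g u - one u) (subst f g) w =
      ∑ S ∈ (Finset.range w.length).powerset.filter (fun S => S.Nonempty ∧ 0 ∉ S),
        f (subword w S) * (g (prefixGap w S) * ∏ s ∈ S, g (gapAfter w S s)) :=
  stmt8_general f g hf hg w
end

section
/- Univariate iterated pre-Lie products: let h = Σ_{n≥1} h_n x^n be a one-variable series with zero constant term, and define R^{(0)}(h) := h and R^{(n)}(h) := R^{(n−1)}(h) ◁ h. Then for every n ≥ 1 and k ≥ n, the coefficient of x^k in R^{(n−1)}(h) equals Σ_{i_1+⋯+i_n=k, i_j≥1} (i_1+1)(i_1+i_2+1)⋯(i_1+⋯+i_{n−1}+1)·h_{i_1}⋯h_{i_n} (the empty product for n = 1 being 1), and it vanishes for k < n. -/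
open PowerSeries

variable {A : Type*}

/-- The univariate pre-Lie product, the bilinear extension to series with zero constant
term of the insertion product on monomials `x^a ◁ x^b = Σ_{k=0}^{a} x^k x^b x^{a−k}
= (a+1)·x^{a+b}`. -/
noncomputable def triPS [CommRing A] (f g : PowerSeries A) : PowerSeries A :=
  PowerSeries.mk fun k =>
    ∑ p ∈ Finset.HasAntidiagonal.antidiagonal k, ((p.1 : A) + 1) * coeff p.1 f * coeff p.2 g

/-- Iterated right pre-Lie powers: `RPS h 0 = h = R^{(0)}(h)`, `RPS h n = R^{(n)}(h)`. -/
noncomputable def RPS [CommRing A] (h : PowerSeries A) : ℕ → PowerSeries A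
  | 0 => h
  | n + 1 => triPS (RPS h n) h

/-- The weight `(i_1+1)(i_1+i_2+1)⋯(i_1+⋯+i_{n−1}+1)` of a composition `(i_1,…,i_n)`
(the empty product, for `n = 1`, being `1`). -/
def weight [CommRing A] {k : ℕ} (c : Composition k) : A :=
  ∏ j ∈ Finset.range (c.length - 1), ((c.sizeUpTo (j + 1) : A) + 1)

/-- The product `h_{i_1}⋯h_{i_n}` over the parts of a composition `(i_1,…,i_n)`. -/
noncomputable def prodH [CommRing A] (h : PowerSeries A) {k : ℕ} (c : Composition k) : A :=
  (c.blocks.map fun i => coeff i h).prod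

/-! Since `coeff 0 h = 0`, the coefficient of `x^k` in `R^{(n)}(h) = R^{(n-1)}(h) ◁ h` only collects
the products `x^a ◁ x^b = (a+1) x^k` with `b ≥ 1`. A composition of `k` into `n + 1` blocks is
exactly a composition of `a` into `n` blocks followed by a last block `b`, and its weight is the
weight of the shorter composition times `a + 1`, so the formula follows by induction on `n`. -/

open Finset

namespace Composition

theorem filter_length_eq_empty {k n : ℕ} (hkn : k < n) :
    univ.filter (fun c : Composition k => c.length = n) = ∅ :=
  filter_false_of_mem fun c _ => (c.length_le.trans_lt hkn).ne

theorem filter_length_eq_one {k : ℕ} (hk : 0 < k) :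
    univ.filter (fun c : Composition k => c.length = 1) = {single k hk} := by
  ext c
  simp [eq_single_iff_length hk]

theorem sum_filter_length_succ {M : Type*} [AddCommMonoid M] (F : List ℕ → M) (k n : ℕ) :
    ∑ c ∈ univ.filter (fun c : Composition k => c.length = n + 1), F c.blocks =
      ∑ p ∈ (antidiagonal k).filter (fun p => 0 < p.2),
        ∑ c ∈ univ.filter (fun c : Composition p.1 => c.length = n), F (c.blocks ++ [p.2]) := by
  have exists_eq_append_singleton (c : Composition k) (hc : c.length = n + 1) :
      ∃ l b, c.blocks = l ++ [b] := by
    rcases List.eq_nil_or_concat c.blocks with h | ⟨l, b, h⟩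
    · simp [← blocks_length, h] at hc
    · exact ⟨l, b, by simpa using h⟩
  rw [sum_sigma']
  symm
  refine sum_bij'
    (fun x hx => ⟨x.2.blocks ++ [x.1.2], ?_, ?_⟩)
    (fun c _ => ⟨(c.blocks.dropLast.sum, c.blocks.getLastD 0),
      ⟨c.blocks.dropLast, fun hi => c.blocks_pos (List.dropLast_subset _ hi), rfl⟩⟩)
    ?_ ?_ ?_ ?_ fun _ _ => rfl
  · simp only [mem_sigma, mem_filter, mem_univ, true_and] at hx
    intro i hi
    rcases List.mem_append.1 hi with hi | hi
    · exact x.2.blocks_pos hi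
    · simp_all
  · simp only [mem_sigma, mem_filter, HasAntidiagonal.mem_antidiagonal] at hx
    simp [x.2.blocks_sum, hx.1.1]
  · intro x hx
    simp only [mem_sigma, mem_filter, mem_univ, true_and] at hx ⊢
    simp [length, hx]
  · intro c hc
    simp only [mem_filter, mem_univ, true_and] at hc
    obtain ⟨l, b, hlb⟩ := exists_eq_append_singleton c hc
    have hsum := c.blocks_sum
    have hb := c.blocks_pos (i := b) (by simp [hlb])
    simp only [← blocks_length, hlb, List.length_append, List.length_singleton,
      Nat.add_right_cancel_iff] at hc
    simp_all [length]
  · intro x _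
    obtain ⟨⟨a, b⟩, ⟨l, hl, hsum⟩⟩ := x
    obtain rfl : l.sum = a := hsum
    simp only [Sigma.mk.injEq, List.dropLast_concat, List.getLastD_concat, true_and]
    congr 1 <;> simp
  · intro c hc
    simp only [mem_filter, mem_univ, true_and] at hc
    obtain ⟨l, b, hlb⟩ := exists_eq_append_singleton c hc
    ext1
    simp [hlb]

end Composition

def blocksWeight [CommSemiring A] (l : List ℕ) : A :=
  ∏ j ∈ range (l.length - 1), (((l.take (j + 1)).sum : A) + 1)

theorem blocksWeight_append_singleton [CommSemiring A] (l : List ℕ) (b : ℕ) :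
    (blocksWeight (l ++ [b]) : A) = blocksWeight l * ((l.sum : A) + 1) := by
  rcases eq_or_ne l [] with rfl | hl
  · simp [blocksWeight]
  obtain ⟨m, hm⟩ : ∃ m, l.length = m + 1 :=
    Nat.exists_eq_add_one_of_ne_zero (List.length_pos_iff.2 hl).ne'
  rw [blocksWeight, blocksWeight, List.length_append, List.length_singleton, hm,
    Nat.add_sub_cancel, prod_range_succ, Nat.add_sub_cancel]
  congr 1
  · refine prod_congr rfl fun j hj => ?_
    rw [List.take_append_of_le_length (by simp at hj; omega)]
  · simp [← hm]

section

variable [CommRing A]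

theorem weight_eq_blocksWeight {k : ℕ} (c : Composition k) :
    (weight c : A) = blocksWeight c.blocks :=
  rfl

theorem coeff_triPS (f g : PowerSeries A) (k : ℕ) :
    coeff k (triPS f g) = ∑ p ∈ antidiagonal k, ((p.1 : A) + 1) * coeff p.1 f * coeff p.2 g :=
  coeff_mk _ _

theorem coeff_RPS {h : PowerSeries A} (hh : coeff 0 h = 0) (n k : ℕ) :
    coeff k (RPS h n) =
      ∑ c ∈ univ.filter (fun c : Composition k => c.length = n + 1), weight c * prodH h c := by
  induction n generalizing k with
  | zero =>
    rcases k.eq_zero_or_pos with rfl | hk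
    · simp [RPS, hh, Composition.filter_length_eq_empty]
    · simp [RPS, Composition.filter_length_eq_one hk, weight, prodH]
  | succ n ih =>
    have hsupp : ∀ p ∈ antidiagonal k,
        ((p.1 : A) + 1) * coeff p.1 (RPS h n) * coeff p.2 h ≠ 0 → 0 < p.2 := by
      intro p _ hp
      refine Nat.pos_of_ne_zero fun h0 => hp ?_
      rw [h0, hh, mul_zero]
    let F : List ℕ → A := fun l => blocksWeight l * (l.map fun i => coeff i h).prod
    calc coeff k (RPS h (n + 1))
        = ∑ p ∈ (antidiagonal k).filter (fun p => 0 < p.2),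
            ((p.1 : A) + 1) * coeff p.1 (RPS h n) * coeff p.2 h := by
          rw [RPS, coeff_triPS, sum_filter_of_ne hsupp]
      _ = ∑ p ∈ (antidiagonal k).filter (fun p => 0 < p.2),
            ∑ c ∈ univ.filter (fun c : Composition p.1 => c.length = n + 1),
              F (c.blocks ++ [p.2]) := by
          refine sum_congr rfl fun p _ => ?_
          rw [ih, mul_sum, sum_mul]
          refine sum_congr rfl fun c _ => ?_
          simp only [F, blocksWeight_append_singleton, c.blocks_sum, List.map_append,
            List.prod_append, ← weight_eq_blocksWeight, prodH, List.map_cons, List.map_nil,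
            List.prod_cons, List.prod_nil, mul_one]
          ring
      _ = ∑ c ∈ univ.filter (fun c : Composition k => c.length = n + 1 + 1), F c.blocks :=
          (Composition.sum_filter_length_succ F k (n + 1)).symm

end

/-- univariate iterated pre-Lie products.  For `h = Σ_{n≥1} h_n x^n` with zero
constant term, `n ≥ 1` and any `k`, the coefficient of `x^k` in `R^{(n−1)}(h)` equals
`Σ_{i_1+⋯+i_n=k, i_j≥1} (i_1+1)(i_1+i_2+1)⋯(i_1+⋯+i_{n−1}+1)·h_{i_1}⋯h_{i_n}` — a sum over
the compositions of `k` of length `n` — and it vanishes for `k < n`. -/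
theorem stmt16 [CommRing A] (h : PowerSeries A) (hh : coeff 0 h = 0)
    (n : ℕ) (hn : 1 ≤ n) (k : ℕ) :
    (n ≤ k →
      coeff k (RPS h (n - 1)) =
        ∑ c ∈ Finset.univ.filter (fun c : Composition k => c.length = n),
          weight c * prodH h c) ∧
    (k < n → coeff k (RPS h (n - 1)) = 0) := by
  obtain ⟨m, rfl⟩ := Nat.exists_eq_add_of_le' hn
  rw [Nat.add_sub_cancel, coeff_RPS hh]
  exact ⟨fun _ => rfl, fun hk => by rw [Composition.filter_length_eq_empty hk, sum_empty]⟩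
end
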